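/- Let Z be a standard normal real random variable, μ ∈ ℝ, and σ ≥ 0. Then for any ξ ∈ (0,1), with probability at least 1 − ξ, |(μ + σZ)² − (μ² + σ²)| ≤ 2σ|μ|√(2 log(4/ξ)) + 2σ²(√(log(4/ξ)) + log(4/ξ)). -/

import Mathlib

open MeasureTheory ProbabilityTheory Real Matrix Finset

noncomputable section

namespace PermReg

/-- `v` is a permutation matrix. -/
def IsPermMatrix {n : ℕ} (M : Matrix (Fin n) (Fin n) ℝ) : Prop :=
  ∃ σ : Equiv.Perm (Fin n), M = σ.permMatrix ℝ

/-- Hamming distance `d(Π, I_n)`: number of zero diagonal entries. -/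
def hamId {n : ℕ} (M : Matrix (Fin n) (Fin n) ℝ) : ℕ :=
  (Finset.univ.filter fun i => M i i = 0).card

/-- The set `P_{n,k}` of `k`-sparse permutation matrices. -/
def PermSparse (n k : ℕ) : Set (Matrix (Fin n) (Fin n) ℝ) :=
  {M | IsPermMatrix M ∧ hamId M ≤ k}

/-- Matrix of the orthogonal projection onto a submodule of `EuclideanSpace ℝ (Fin n)`. -/
noncomputable def projMat {n : ℕ} (V : Submodule ℝ (EuclideanSpace ℝ (Fin n))) :
    Matrix (Fin n) (Fin n) ℝ :=
  Matrix.of fun i j =>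
    (Submodule.orthogonalProjection V (EuclideanSpace.single j 1) : EuclideanSpace ℝ (Fin n)) i

/-- Column space of a matrix, as a submodule of `EuclideanSpace ℝ (Fin n)`. -/
def colSpace {n p : ℕ} (A : Matrix (Fin n) (Fin p) ℝ) :
    Submodule ℝ (EuclideanSpace ℝ (Fin n)) :=
  Submodule.span ℝ (Set.range fun j : Fin p => (WithLp.toLp 2 (fun i => A i j) : EuclideanSpace ℝ (Fin n)))

/-- `M_A`: orthogonal projection matrix onto the column space of `A`. -/
noncomputable def projCol {n p : ℕ} (A : Matrix (Fin n) (Fin p) ℝ) :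
    Matrix (Fin n) (Fin n) ℝ :=
  projMat (colSpace A)

/-- `M_{(A,u)}`: orthogonal projection matrix onto the column span of the matrix `[A, u]`. -/
noncomputable def projAug {n p : ℕ} (A : Matrix (Fin n) (Fin p) ℝ) (u : Fin n → ℝ) :
    Matrix (Fin n) (Fin n) ℝ :=
  projMat (colSpace A ⊔ Submodule.span ℝ {(WithLp.toLp 2 u : EuclideanSpace ℝ (Fin n))})

/-- `M_v`: orthogonal projection onto the span of a single vector (zero matrix if `v = 0`). -/
noncomputable def projVec {n : ℕ} (v : Fin n → ℝ) : Matrix (Fin n) (Fin n) ℝ :=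
  projMat (Submodule.span ℝ {(WithLp.toLp 2 v : EuclideanSpace ℝ (Fin n))})

/-- Squared Euclidean norm `‖v‖₂²`. -/
def sqNorm {ι : Type*} [Fintype ι] (v : ι → ℝ) : ℝ := ∑ i, (v i) ^ 2

/-- Euclidean norm `‖v‖₂`. -/
noncomputable def norm2 {ι : Type*} [Fintype ι] (v : ι → ℝ) : ℝ := Real.sqrt (sqNorm v)

/-- Operator (spectral) norm of a matrix. -/
noncomputable def opNorm {n p : ℕ} (A : Matrix (Fin n) (Fin p) ℝ) : ℝ :=
  ‖(Matrix.toEuclideanLin A).toContinuousLinearMap‖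

/-- Squared cosine similarity `φ(v₁,v₂)`, equal to `0` if either vector is zero. -/
noncomputable def phi {n : ℕ} (v w : Fin n → ℝ) : ℝ :=
  (∑ i, v i * w i) ^ 2 / (sqNorm v * sqNorm w)

/-- Standard Gaussian measure `N(0, I_n)` on `ℝⁿ`. -/
noncomputable def stdGaussian (n : ℕ) : Measure (Fin n → ℝ) :=
  Measure.pi fun _ => gaussianReal 0 1

/-- `M_X := X (Xᵀ X)⁻¹ Xᵀ`. -/
noncomputable def hatMat {n p : ℕ} (X : Matrix (Fin n) (Fin p) ℝ) :
    Matrix (Fin n) (Fin n) ℝ :=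
  X * (Xᵀ * X)⁻¹ * Xᵀ

/-- Separation constant `C_min(Pi0)`. -/
noncomputable def Cmin {n p : ℕ} (k : ℕ) (X : Matrix (Fin n) (Fin p) ℝ)
    (Pi0 : Matrix (Fin n) (Fin n) ℝ) (β₀ : Fin p → ℝ) : ℝ :=
  sInf {r : ℝ | ∃ Pm ∈ PermSparse n k, Pm ≠ Pi0 ∧
    r = sqNorm ((1 - Pm * hatMat X * Pmᵀ).mulVec (Pi0.mulVec (X.mulVec β₀))) /
        (n * max ((hamId Pi0 : ℝ) - (hamId Pm : ℝ)) 1)}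

/-- `Ψ(x) = x − 1 − log x`. -/
noncomputable def Psi (x : ℝ) : ℝ := x - 1 - Real.log x

/-- Real-valued derangement number `D_j = j! ∑_{i=0}^{j} (−1)^i / i!`. -/
noncomputable def derangeR (j : ℕ) : ℝ :=
  (Nat.factorial j : ℝ) * ∑ i ∈ Finset.range (j + 1), (-1 : ℝ) ^ i / (Nat.factorial i : ℝ)

/-- The bound `Δ(γ)`. -/
noncomputable def DeltaBound (n p k : ℕ) (Cm σ₀ γ : ℝ) : ℝ :=
  (∑ m ∈ Finset.Icc (n - k) n, (n.choose m : ℝ) * derangeR (n - m) *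
    (Real.exp (-(n / 2 : ℝ) *
        Psi (max 1 (Cm * Real.log (Real.exp 1 / γ) / (2 * σ₀ ^ 2 * γ)))) +
     Real.exp (-(n / 2 : ℝ) *
        Psi (max 1 (Cm * (Real.log (Real.exp 1 / γ)) ^ 2 / (16 * σ₀ ^ 2))))))
  + (Real.pi / 2) ^ (n - p - 2) * (Nat.card (PermSparse n k) : ℝ) *
      (γ * Real.log (Real.exp 1 / γ)) ^ (((n : ℝ) - p - 1) / 2)


open Filter in
private lemma gauss_tail_aux {t : ℝ} (ht : 1 ≤ t) :
    gaussianReal 0 1 {z : ℝ | t < |z|} ≤ ENNReal.ofReal (2 * Real.exp (-(t^2/2))) := by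
  have hderiv : ∀ x : ℝ, HasDerivAt (fun y : ℝ => -Real.exp (-(y^2/2)))
      (x * Real.exp (-(x^2/2))) x := by
    intro x
    have h1 : HasDerivAt (fun y : ℝ => -(y^2/2)) (-x) x := by
      have := ((hasDerivAt_pow 2 x).div_const 2).fun_neg
      refine this.congr_deriv ?_
      ring
    have := (h1.exp).fun_neg
    refine this.congr_deriv ?_
    ring
  have hcont : ContinuousWithinAt (fun y : ℝ => -Real.exp (-(y^2/2))) (Set.Ici t) t :=
    (Continuous.neg (by continuity)).continuousWithinAt
  have htend : Tendsto (fun y : ℝ => -Real.exp (-(y^2/2))) atTop (nhds 0) := by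
    have h2 : Tendsto (fun y : ℝ => -(y^2/2)) atTop atBot := by
      apply tendsto_neg_atTop_atBot.comp
      exact (tendsto_pow_atTop two_ne_zero).atTop_div_const (by norm_num)
    have := (Real.tendsto_exp_atBot).comp h2
    simpa using this.neg
  have hnn : ∀ x ∈ Set.Ioi t, 0 ≤ x * Real.exp (-(x^2/2)) := by
    intro x hx
    exact mul_nonneg (by have := hx.out; linarith) (Real.exp_nonneg _)
  have hint : IntegrableOn (fun x => x * Real.exp (-(x^2/2))) (Set.Ioi t) :=
    integrableOn_Ioi_deriv_of_nonneg hcont (fun x _ => hderiv x) hnn htend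
  have hval : ∫ x in Set.Ioi t, x * Real.exp (-(x^2/2)) = Real.exp (-(t^2/2)) := by
    rw [integral_Ioi_of_hasDerivAt_of_tendsto hcont (fun x _ => hderiv x) hint htend]
    ring
  have hpdf : ∀ x ∈ Set.Ioi t, gaussianPDFReal 0 1 x ≤ x * Real.exp (-(x^2/2)) := by
    intro x hx
    have hx1 : 1 ≤ x := le_trans ht hx.out.le
    rw [gaussianPDFReal]
    simp only [sub_zero, NNReal.coe_one, mul_one]
    have h2π : (1:ℝ) ≤ Real.sqrt (2*π) := by
      rw [show (1:ℝ) = Real.sqrt 1 by simp]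
      exact Real.sqrt_le_sqrt (by nlinarith [Real.pi_gt_three])
    have hinv : (Real.sqrt (2*π))⁻¹ ≤ 1 := by
      rw [inv_le_one_iff₀]; right; exact h2π
    have hE : Real.exp (-x^2/2) = Real.exp (-(x^2/2)) := by rw [neg_div]
    rw [hE]
    nlinarith [Real.exp_nonneg (-(x^2/2)), Real.exp_pos (-(x^2/2))]
  have hIoi : gaussianReal 0 1 (Set.Ioi t) ≤ ENNReal.ofReal (Real.exp (-(t^2/2))) := by
    rw [gaussianReal_apply_eq_integral 0 one_ne_zero]
    apply ENNReal.ofReal_le_ofReal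
    rw [← hval]
    exact setIntegral_mono_on ((integrable_gaussianPDFReal 0 1).integrableOn) hint
      measurableSet_Ioi hpdf
  have hmap : (gaussianReal 0 1).map (fun x : ℝ => -x) = gaussianReal 0 1 := by
    have h := gaussianReal_map_const_mul (μ := 0) (v := 1) (-1)
    have hv : (⟨(-1:ℝ)^2, sq_nonneg _⟩ : NNReal) * 1 = 1 := by
      ext; norm_num
    rw [show NNReal.mk ((-1:ℝ)^2) (sq_nonneg _) * 1 = 1 from hv] at h
    simpa [neg_one_mul] using h
  have hIio : gaussianReal 0 1 (Set.Iio (-t)) = gaussianReal 0 1 (Set.Ioi t) := by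
    conv_lhs => rw [← hmap]
    rw [Measure.map_apply measurable_neg measurableSet_Iio]
    congr 1
    ext x
    simp [neg_lt_neg_iff]
  have hset : {z : ℝ | t < |z|} = Set.Ioi t ∪ Set.Iio (-t) := by
    ext z
    simp only [Set.mem_setOf_eq, Set.mem_union, Set.mem_Ioi, Set.mem_Iio, lt_abs]
    constructor
    · rintro (h | h)
      · exact Or.inl h
      · exact Or.inr (by linarith)
    · rintro (h | h)
      · exact Or.inl h
      · exact Or.inr (by linarith)
  calc gaussianReal 0 1 {z : ℝ | t < |z|}
      ≤ gaussianReal 0 1 (Set.Ioi t) + gaussianReal 0 1 (Set.Iio (-t)) := by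
        rw [hset]; exact measure_union_le _ _
    _ = gaussianReal 0 1 (Set.Ioi t) + gaussianReal 0 1 (Set.Ioi t) := by rw [hIio]
    _ ≤ ENNReal.ofReal (Real.exp (-(t^2/2))) + ENNReal.ofReal (Real.exp (-(t^2/2))) :=
        add_le_add hIoi hIoi
    _ = ENNReal.ofReal (2 * Real.exp (-(t^2/2))) := by
        rw [← ENNReal.ofReal_add (Real.exp_nonneg _) (Real.exp_nonneg _)]; ring_nf

/-- concentration of `(μ + σZ)²` for a standard normal `Z`. -/
theorem statement15 (μ σ ξ : ℝ) (hσ : 0 ≤ σ) (hξ : ξ ∈ Set.Ioo (0 : ℝ) 1) :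
    ENNReal.ofReal (1 - ξ) ≤
      gaussianReal 0 1
        {z | |(μ + σ * z) ^ 2 - (μ ^ 2 + σ ^ 2)| ≤
          2 * σ * |μ| * Real.sqrt (2 * Real.log (4 / ξ)) +
            2 * σ ^ 2 * (Real.sqrt (Real.log (4 / ξ)) + Real.log (4 / ξ))} := by
  obtain ⟨hξ0, hξ1⟩ := hξ
  set L := Real.log (4 / ξ) with hLdef
  have h4ξ : (4:ℝ) < 4 / ξ := by
    rw [lt_div_iff₀ hξ0]; nlinarith
  have hL1 : 1 < L := by
    calc (1:ℝ) < Real.log 4 := by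
          rw [Real.lt_log_iff_exp_lt (by norm_num)]
          linarith [Real.exp_one_lt_d9]
      _ < L := Real.log_lt_log (by norm_num) h4ξ
  set t := Real.sqrt (2 * L) with htdef
  have ht2 : t ^ 2 = 2 * L := Real.sq_sqrt (by linarith)
  have ht0 : 0 ≤ t := Real.sqrt_nonneg _
  have ht1 : 1 ≤ t := by nlinarith
  set sL := Real.sqrt L with hsLdef
  have hsL2 : sL ^ 2 = L := Real.sq_sqrt (by linarith)
  have hsL0 : 0 ≤ sL := Real.sqrt_nonneg _
  have hsub : {z : ℝ | |z| ≤ t} ⊆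
      {z | |(μ + σ * z) ^ 2 - (μ ^ 2 + σ ^ 2)| ≤
          2 * σ * |μ| * t + 2 * σ ^ 2 * (sL + L)} := by
    intro z hz
    simp only [Set.mem_setOf_eq] at hz ⊢
    have hz2 : z ^ 2 ≤ t ^ 2 := by
      rw [← sq_abs]; exact pow_le_pow_left₀ (abs_nonneg z) hz 2
    have hsplit : (μ + σ * z) ^ 2 - (μ ^ 2 + σ ^ 2) = 2*μ*σ*z + σ^2*(z^2-1) := by ring
    rw [hsplit]
    have h1 : |2*μ*σ*z| ≤ 2 * σ * |μ| * t := by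
      have : |2*μ*σ*z| = 2 * σ * |μ| * |z| := by
        rw [abs_mul, abs_mul, abs_mul, abs_two, abs_of_nonneg hσ]; ring
      rw [this]
      have : 0 ≤ 2 * σ * |μ| := by positivity
      exact mul_le_mul_of_nonneg_left hz this
    have h2 : |σ^2*(z^2-1)| ≤ 2 * σ^2 * (sL + L) := by
      rw [abs_mul, abs_of_nonneg (sq_nonneg σ)]
      have hzb : |z^2 - 1| ≤ 2 * (sL + L) := by
        rw [abs_le]
        constructor <;> nlinarith
      calc σ^2 * |z^2-1| ≤ σ^2 * (2 * (sL + L)) :=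
            mul_le_mul_of_nonneg_left hzb (sq_nonneg σ)
        _ = 2 * σ^2 * (sL + L) := by ring
    calc |2*μ*σ*z + σ^2*(z^2-1)| ≤ |2*μ*σ*z| + |σ^2*(z^2-1)| := abs_add_le _ _
      _ ≤ 2 * σ * |μ| * t + 2 * σ^2 * (sL + L) := add_le_add h1 h2
  have hmeas : MeasurableSet {z : ℝ | t < |z|} :=
    (isOpen_lt continuous_const continuous_abs).measurableSet
  have htail : gaussianReal 0 1 {z : ℝ | t < |z|} ≤ ENNReal.ofReal ξ := by
    refine le_trans (gauss_tail_aux ht1) (ENNReal.ofReal_le_ofReal ?_)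
    have hexp : Real.exp (-(t^2/2)) = ξ / 4 := by
      rw [ht2]
      have : Real.exp L = 4 / ξ := Real.exp_log (by positivity)
      rw [show -(2*L/2) = -L by ring, Real.exp_neg, this]
      rw [inv_div]
    rw [hexp]; linarith
  have hcompl : {z : ℝ | |z| ≤ t} = {z : ℝ | t < |z|}ᶜ := by
    ext z; simp [not_lt]
  have hle : ENNReal.ofReal (1 - ξ) ≤ gaussianReal 0 1 {z : ℝ | |z| ≤ t} := by
    rw [hcompl, measure_compl hmeas (measure_ne_top _ _), measure_univ]
    refine ENNReal.le_sub_of_add_le_right (measure_ne_top _ _) ?_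
    calc ENNReal.ofReal (1 - ξ) + gaussianReal 0 1 {z : ℝ | t < |z|}
        ≤ ENNReal.ofReal (1 - ξ) + ENNReal.ofReal ξ := add_le_add le_rfl htail
      _ = 1 := by
          rw [← ENNReal.ofReal_add (by linarith) hξ0.le]
          norm_num
  exact le_trans hle (measure_mono hsub)

end PermReg
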